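/- Let N ≥ 1. In M_N^B × M_N^B with the tensor-product operators (1 ≤ l ≤ N by the tensor rule, l = 0 by the super rule), the elements x ⊗ y satisfying f̃_i(x ⊗ y) = 0 for all 0 ≤ i ≤ N are exactly the following: ((+,…,+), 0) ⊗ ((−,…,−), k) for each k ∈ ℤ_{≥0}; ((+,…,+), 0) ⊗ ((+^j, −^{N−j}), 0) for each 1 ≤ j ≤ N−1, where (+^j, −^{N−j}) has first j entries + and last N−j entries −; and ((+,…,+), 0) ⊗ ((+,…,+), 0). -/

import Mathlib

/-!
For `l ≥ 1` the operators `ẽ_l` and `f̃_l` square to zero, so the string lengths `ε_l`, `φ_l`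
are `0` or `1`, and `f̃_l (x ⊗ y) = 0` means `f̃_l x = 0` together with `f̃_l y = 0` or
`ẽ_l x ≠ 0`. Being killed by all `f̃_l`, `l ≥ 1`, forces the signs of `x` to be `(+,…,+)`;
then `ẽ_l x ≠ 0` only for `l = N`, so the signs of `y` contain no `(−,+)`, i.e. they are
antitone, i.e. of the form `(+^j, −^{N−j})`. The super rule for `f̃_0` then forces the
integer of `x` to vanish, and that of `y` as well unless `y` starts with `−`.
-/

namespace CrystalPaper

/-- A sign sequence of length `N`: `true` codes `+`, `false` codes `−`. -/
abbrev Seq (N : ℕ) := Fin N → Bool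

/-- The constant sequence `(+,…,+)`. -/
def top (N : ℕ) : Seq N := fun _ => true

/-- The constant sequence `(−,…,−)`. -/
def bot (N : ℕ) : Seq N := fun _ => false

/-- The sequence `(+^k, −^{N−k})` (first `k` entries `+`, the rest `−`). -/
def lowSeq (N k : ℕ) : Seq N := fun i => decide ((i : ℕ) < k)

/-- The number of `−` entries of a sign sequence. -/
def minusCount (N : ℕ) (b : Seq N) : ℕ :=
  (Finset.univ.filter (fun i => b i = false)).card

/-- `B_sp^+`: sign sequences with an even number of `−` entries. -/
def BspPlus (N : ℕ) (b : Seq N) : Prop := Even (minusCount N b)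

/-- `B_sp^−`: sign sequences with an odd number of `−` entries. -/
def BspMinus (N : ℕ) (b : Seq N) : Prop := Odd (minusCount N b)

/-- The type-`B_N` Kashiwara raising operator `ẽ_l`, labels `1 ≤ l ≤ N`.
For `1 ≤ l ≤ N−1` it replaces `(b_l, b_{l+1}) = (+,−)` by `(−,+)`;
`ẽ_N` replaces `b_N = +` by `−`. -/
def eB (N l : ℕ) (b : Seq N) : Option (Seq N) :=
  if h : 1 ≤ l ∧ l + 1 ≤ N then
    let i : Fin N := ⟨l - 1, by omega⟩
    let j : Fin N := ⟨l, by omega⟩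
    if b i = true ∧ b j = false then
      some (Function.update (Function.update b i false) j true)
    else none
  else if h2 : l = N ∧ 1 ≤ N then
    let i : Fin N := ⟨N - 1, by omega⟩
    if b i = true then some (Function.update b i false) else none
  else none

/-- The type-`B_N` Kashiwara lowering operator `f̃_l`, labels `1 ≤ l ≤ N`.
For `1 ≤ l ≤ N−1` it replaces `(b_l, b_{l+1}) = (−,+)` by `(+,−)`;
`f̃_N` replaces `b_N = −` by `+`. -/
def fB (N l : ℕ) (b : Seq N) : Option (Seq N) :=
  if h : 1 ≤ l ∧ l + 1 ≤ N then
    let i : Fin N := ⟨l - 1, by omega⟩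
    let j : Fin N := ⟨l, by omega⟩
    if b i = false ∧ b j = true then
      some (Function.update (Function.update b i true) j false)
    else none
  else if h2 : l = N ∧ 1 ≤ N then
    let i : Fin N := ⟨N - 1, by omega⟩
    if b i = false then some (Function.update b i true) else none
  else none

/-- `n`-fold iteration of a partial operator. -/
def iterOp {σ : Type*} (f : σ → Option σ) : ℕ → σ → Option σ
  | 0, x => some x
  | n + 1, x => (f x).bind (iterOp f n)

/-- `max {n ≥ 0 : f^n x ≠ 0}`, as a supremum in `ℕ`.  Used for the string
lengths `ε_l(x) = max{n : ẽ_l^n x ≠ 0}` and `φ_l(x) = max{n : f̃_l^n x ≠ 0}`. -/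
noncomputable def opMax {σ : Type*} (f : σ → Option σ) (x : σ) : ℕ :=
  sSup {n | iterOp f n x ≠ none}

/-- Elements of the combinatorial model `M_N^B` of `B(−ω_N)` for `U_q(B(N,1))`:
all pairs of a sign sequence and a non-negative integer. -/
abbrev MSeqB (N : ℕ) := Seq N × ℕ

/-- The operators `ẽ_l`, `0 ≤ l ≤ N`, on the model `M_N^B`. -/
def eSB (N l : ℕ) (x : MSeqB N) : Option (MSeqB N) :=
  if l = 0 then
    if h : 1 ≤ N then
      if x.1 ⟨0, h⟩ = false then some (Function.update x.1 ⟨0, h⟩ true, x.2 + 1) else none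
    else none
  else (eB N l x.1).map fun b => (b, x.2)

/-- The operators `f̃_l`, `0 ≤ l ≤ N`, on the model `M_N^B`. -/
def fSB (N l : ℕ) (x : MSeqB N) : Option (MSeqB N) :=
  if l = 0 then
    if h : 1 ≤ N then
      if x.1 ⟨0, h⟩ = true ∧ 1 ≤ x.2 then some (Function.update x.1 ⟨0, h⟩ false, x.2 - 1)
      else none
    else none
  else (fB N l x.1).map fun b => (b, x.2)

/-- `⟨h_0, (b,k)⟩ = k` if `b_1 = +`, and `k + 1` if `b_1 = −`. -/
def hZeroB (N : ℕ) (x : MSeqB N) : ℕ :=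
  if h : 1 ≤ N then (if x.1 ⟨0, h⟩ = true then x.2 else x.2 + 1) else x.2

/-- The tensor-product lowering operators on `M_N^B × M_N^B`:
the super rule for `l = 0`, the tensor rule for `1 ≤ l ≤ N`. -/
noncomputable def tfSB (N l : ℕ) (p : MSeqB N × MSeqB N) : Option (MSeqB N × MSeqB N) :=
  if l = 0 then
    if hZeroB N p.1 = 0 then (fSB N 0 p.2).map fun y => (p.1, y)
    else (fSB N 0 p.1).map fun x => (x, p.2)
  else
    if opMax (eSB N l) p.1 < opMax (fSB N l) p.2 then (fSB N l p.2).map fun y => (p.1, y)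
    else (fSB N l p.1).map fun x => (x, p.2)

lemma opMax_eq_ite {σ : Type*} {f : σ → Option σ} {x : σ} (h : (f x).bind f = none) :
    opMax f x = if f x = none then 0 else 1 := by
  rcases hx : f x with _ | x'
  · have hs : {n | iterOp f n x ≠ none} = {0} := by
      ext (_ | n) <;> simp [iterOp, hx]
    rw [opMax, hs, csSup_singleton, if_pos rfl]
  · have hx' : f x' = none := by simpa [hx] using h
    have hs : {n | iterOp f n x ≠ none} = Set.Iic 1 := by
      ext (_ | _ | n) <;> simp [iterOp, hx, hx']
    rw [opMax, hs, csSup_Iic, if_neg (Option.some_ne_none x')]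

lemma fB_bind_fB (N l : ℕ) (b : Seq N) : (fB N l b).bind (fB N l) = none := by
  unfold fB
  split_ifs <;> simp_all [Function.update_apply]

lemma eB_bind_eB (N l : ℕ) (b : Seq N) : (eB N l b).bind (eB N l) = none := by
  unfold eB
  split_ifs <;> simp_all [Function.update_apply]

lemma opMax_fSB {N l : ℕ} (hl : l ≠ 0) (y : MSeqB N) :
    opMax (fSB N l) y = if fB N l y.1 = none then 0 else 1 := by
  have h := fB_bind_fB N l y.1
  rw [opMax_eq_ite] <;> rcases hb : fB N l y.1 <;> simp_all [fSB]

lemma opMax_eSB {N l : ℕ} (hl : l ≠ 0) (x : MSeqB N) :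
    opMax (eSB N l) x = if eB N l x.1 = none then 0 else 1 := by
  have h := eB_bind_eB N l x.1
  rw [opMax_eq_ite] <;> rcases hb : eB N l x.1 <;> simp_all [eSB]

lemma tfSB_eq_none_iff {N l : ℕ} (hl : l ≠ 0) (x y : MSeqB N) :
    tfSB N l (x, y) = none ↔
      fB N l x.1 = none ∧ (fB N l y.1 = none ∨ eB N l x.1 ≠ none) := by
  rw [tfSB, if_neg hl, opMax_fSB hl, opMax_eSB hl]
  rcases hy : fB N l y.1 <;> rcases eB N l x.1 <;> simp [fSB, hl, hy]

lemma tfSB_zero_eq_none_iff {N : ℕ} (hN : 1 ≤ N) (x y : MSeqB N) :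
    tfSB N 0 (x, y) = none ↔
      x.1 ⟨0, hN⟩ = false ∨ x.2 = 0 ∧ (y.1 ⟨0, hN⟩ = false ∨ y.2 = 0) := by
  simp only [tfSB, hZeroB, dif_pos hN, fSB]
  rcases x.1 ⟨0, hN⟩ <;> rcases y.1 ⟨0, hN⟩ <;> rcases x.2 <;> rcases y.2 <;> simp

lemma fB_succ_eq_none_iff {n : ℕ} (b : Seq (n + 1)) (i : Fin n) :
    fB (n + 1) (i + 1) b = none ↔ b i.succ ≤ b i.castSucc := by
  have hi : (⟨i + 1 - 1, by omega⟩ : Fin (n + 1)) = i.castSucc := Fin.ext (by simp)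
  rw [fB, dif_pos ⟨by omega, by omega⟩]
  simp only [hi, Bool.le_iff_imp]
  rcases b i.castSucc <;> rcases hs : b ⟨i + 1, by omega⟩ <;> simp_all [Fin.succ]

lemma fB_last_eq_none_iff {n : ℕ} (b : Seq (n + 1)) :
    fB (n + 1) (n + 1) b = none ↔ b (Fin.last n) = true := by
  rw [fB, dif_neg (by omega), dif_pos ⟨rfl, by omega⟩]
  rcases hb : b (Fin.last n) <;> simp_all [Fin.last]

lemma fB_top (N l : ℕ) : fB N l (top N) = none := by
  unfold fB
  split_ifs <;> simp_all [top]

lemma eB_top_of_lt {N l : ℕ} (hl : l + 1 ≤ N) : eB N l (top N) = none := by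
  unfold eB
  split_ifs <;> simp_all [top]

lemma eB_top_self {N : ℕ} (hN : 1 ≤ N) : eB N N (top N) ≠ none := by
  rw [eB, dif_neg (by omega), dif_pos ⟨rfl, hN⟩]
  simp [top]

lemma antitone_iff_forall_fB_eq_none {N : ℕ} (b : Seq N) :
    Antitone b ↔ ∀ l, 1 ≤ l → l + 1 ≤ N → fB N l b = none := by
  cases N with
  | zero => exact iff_of_true (fun i => i.elim0) fun l _ h => by omega
  | succ n =>
    rw [Fin.antitone_iff_succ_le]
    refine ⟨fun h l h1 h2 => ?_,
      fun h i => (fB_succ_eq_none_iff b i).1 (h _ (by omega) (by omega))⟩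
    obtain ⟨i, rfl⟩ : ∃ i : Fin n, l = i + 1 := ⟨⟨l - 1, by omega⟩, by simp; omega⟩
    exact (fB_succ_eq_none_iff b i).2 (h i)

lemma antitone_iff_exists_eq_lowSeq {N : ℕ} (b : Seq N) :
    Antitone b ↔ ∃ j ≤ N, b = lowSeq N j := by
  refine ⟨fun hb => ?_, ?_⟩
  · classical
    -- `j` is the first position carrying a `−`, or `N` if there is none
    have hP : ∃ j, ∀ h : j < N, b ⟨j, h⟩ = false := ⟨N, fun h => absurd h (lt_irrefl N)⟩
    refine ⟨Nat.find hP, Nat.find_min' hP fun h => absurd h (lt_irrefl N), funext fun i => ?_⟩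
    by_cases hi : (i : ℕ) < Nat.find hP
    · simpa [lowSeq, hi] using Nat.find_min hP hi
    · have hj := Nat.find_spec hP (by omega)
      have := hb (show (⟨Nat.find hP, by omega⟩ : Fin N) ≤ i from not_lt.1 hi)
      simp_all [lowSeq, Bool.le_iff_imp]
  · rintro ⟨j, -, rfl⟩ i i' hii'
    simp only [lowSeq, Bool.le_iff_imp, decide_eq_true_eq]
    exact fun h => lt_of_le_of_lt hii' h

lemma lowSeq_zero (N : ℕ) : lowSeq N 0 = bot N := rfl

lemma lowSeq_self (N : ℕ) : lowSeq N N = top N := funext fun i => by simp [lowSeq, top]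

lemma forall_fB_eq_none_iff_eq_top {N : ℕ} (b : Seq N) :
    (∀ l, 1 ≤ l → l ≤ N → fB N l b = none) ↔ b = top N := by
  refine ⟨fun h => ?_, fun h l _ _ => h ▸ fB_top N l⟩
  cases N with
  | zero => exact funext fun i => i.elim0
  | succ n =>
    obtain ⟨j, hj, rfl⟩ := (antitone_iff_exists_eq_lowSeq b).1 <|
      (antitone_iff_forall_fB_eq_none b).2 fun l h1 h2 => h l h1 (by omega)
    have hlast := (fB_last_eq_none_iff _).1 (h (n + 1) (by omega) le_rfl)
    obtain rfl : j = n + 1 := by simp [lowSeq, Fin.last] at hlast; omega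
    exact lowSeq_self _

lemma antitone_fst_and_iff {N : ℕ} (hN : 1 ≤ N) (y : MSeqB N) :
    (Antitone y.1 ∧ (y.1 ⟨0, hN⟩ = false ∨ y.2 = 0)) ↔
      ((∃ k, y = (bot N, k)) ∨
        (∃ j, 1 ≤ j ∧ j ≤ N - 1 ∧ y = (lowSeq N j, 0)) ∨
        y = (top N, 0)) := by
  rw [antitone_iff_exists_eq_lowSeq]
  constructor
  · rintro ⟨⟨j, hj, hy⟩, h0⟩
    obtain rfl | hj0 := Nat.eq_zero_or_pos j
    · exact Or.inl ⟨y.2, Prod.ext hy rfl⟩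
    have hk : y.2 = 0 := by simpa [hy, lowSeq, hj0] using h0
    obtain rfl | hjN := hj.eq_or_lt
    · exact Or.inr (Or.inr (Prod.ext (hy.trans (lowSeq_self j)) hk))
    · exact Or.inr (Or.inl ⟨j, hj0, by omega, Prod.ext hy hk⟩)
  · rintro (⟨k, rfl⟩ | ⟨j, hj1, hj2, rfl⟩ | rfl)
    · exact ⟨⟨0, N.zero_le, lowSeq_zero N⟩, Or.inl rfl⟩
    · exact ⟨⟨j, by omega, rfl⟩, Or.inr rfl⟩
    · exact ⟨⟨N, le_rfl, (lowSeq_self N).symm⟩, Or.inr rfl⟩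

lemma forall_tfSB_eq_none_iff {N : ℕ} (hN : 1 ≤ N) (x y : MSeqB N) :
    (∀ i ≤ N, tfSB N i (x, y) = none) ↔
      x = (top N, 0) ∧ Antitone y.1 ∧ (y.1 ⟨0, hN⟩ = false ∨ y.2 = 0) := by
  constructor
  · intro h
    have hx : x.1 = top N := (forall_fB_eq_none_iff_eq_top x.1).1 fun l h1 h2 =>
      ((tfSB_eq_none_iff (by omega) x y).1 (h l h2)).1
    have h0 := (tfSB_zero_eq_none_iff hN x y).1 (h 0 N.zero_le)
    simp only [hx, top, Bool.true_eq_false, false_or] at h0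
    refine ⟨Prod.ext hx h0.1, (antitone_iff_forall_fB_eq_none y.1).2 fun l h1 h2 => ?_, h0.2⟩
    refine ((tfSB_eq_none_iff (by omega) x y).1 (h l (by omega))).2.resolve_right ?_
    rw [hx, eB_top_of_lt h2]
    exact not_not_intro rfl
  · rintro ⟨rfl, hy, hy0⟩ (_ | l) hl
    · exact (tfSB_zero_eq_none_iff hN _ y).2 (Or.inr ⟨rfl, hy0⟩)
    · refine (tfSB_eq_none_iff l.succ_ne_zero _ y).2 ⟨fB_top N _, ?_⟩
      rcases hl.lt_or_eq with hlt | rfl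
      · exact Or.inl ((antitone_iff_forall_fB_eq_none y.1).1 hy _ (by omega) hlt)
      · exact Or.inr (eB_top_self hN)

/-- For `N ≥ 1`, the lowest weight elements of `M_N^B × M_N^B` (the
model of `B(−ω_N) ⊗ B(−ω_N)` for `U_q(B(N,1))`), i.e. the elements killed by all
tensor-product operators `f̃_i`, `0 ≤ i ≤ N`, are exactly
`((+,…,+),0) ⊗ ((−,…,−),k)` for `k ∈ ℤ_{≥0}`,
`((+,…,+),0) ⊗ ((+^j,−^{N−j}),0)` for `1 ≤ j ≤ N−1`, and
`((+,…,+),0) ⊗ ((+,…,+),0)`. -/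
theorem lowest_weight_MB_tensor_MB (N : ℕ) (hN : 1 ≤ N) (x y : MSeqB N) :
    (∀ i, i ≤ N → tfSB N i (x, y) = none) ↔
      (x = (top N, 0) ∧
        ((∃ k, y = (bot N, k)) ∨
          (∃ j, 1 ≤ j ∧ j ≤ N - 1 ∧ y = (lowSeq N j, 0)) ∨
          y = (top N, 0))) := by
  rw [forall_tfSB_eq_none_iff hN, ← antitone_fst_and_iff hN]

end CrystalPaper
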